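/- For every n ∈ ℕ, ∫_{−∞}^∞ e^{−2x²} H_n(x)² dx = 2^{n−1/2} · Γ(n + 1/2). -/

import Mathlib

open Filter Topology

/-- The physicist Hermite polynomials, defined by their three-term recurrence. -/
noncomputable def physHermite : ℕ → ℝ → ℝ
  | 0 => fun _ => 1
  | 1 => fun x => 2 * x
  | (n + 2) => fun x => 2 * x * physHermite (n + 1) x - 2 * (n + 1) * physHermite n x

open Polynomial MeasureTheory Real

/-- Polynomial version of the physicist Hermite polynomials. -/
noncomputable def PH : ℕ → Polynomial ℝ
  | 0 => 1
  | 1 => C 2 * X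
  | (n + 2) => C 2 * X * PH (n + 1) - C (2 * (n + 1) : ℝ) * PH n

lemma PH_add_two (n : ℕ) :
    PH (n + 2) = C 2 * X * PH (n + 1) - C (2 * ((n : ℝ) + 1)) * PH n := rfl

lemma physHermite_add_two (n : ℕ) (x : ℝ) :
    physHermite (n + 2) x = 2 * x * physHermite (n + 1) x - 2 * ((n : ℝ) + 1) * physHermite n x :=
  rfl

lemma eval_PH : ∀ (n : ℕ) (x : ℝ), (PH n).eval x = physHermite n x
  | 0, x => by simp [PH, physHermite]
  | 1, x => by simp [PH, physHermite]
  | (n + 2), x => by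
      rw [PH_add_two, physHermite_add_two]
      simp only [eval_sub, eval_mul, eval_C, eval_X, eval_PH (n + 1) x, eval_PH n x]

lemma deriv_PH : ∀ n : ℕ, derivative (PH (n + 1)) = C (2 * ((n : ℝ) + 1)) * PH n
  | 0 => by simp [PH]
  | 1 => by
      rw [show (1:ℕ) + 1 = 0 + 2 from rfl, PH_add_two 0]
      simp [PH, derivative_sub, derivative_mul]
      ring
  | (n + 2) => by
      rw [show n + 2 + 1 = (n + 1) + 2 from rfl, PH_add_two]
      simp only [derivative_sub, derivative_mul, derivative_C, derivative_X]
      rw [deriv_PH (n + 1), deriv_PH n, PH_add_two]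
      push_cast [C_add, C_mul, C_1, map_ofNat, map_natCast]
      ring

lemma PH_succ : ∀ n : ℕ, PH (n + 1) = C 2 * X * PH n - derivative (PH n)
  | 0 => by simp [PH]
  | (n + 1) => by rw [deriv_PH n, PH_add_two]

lemma ode_PH : ∀ n : ℕ,
    derivative (derivative (PH n)) = C 2 * X * derivative (PH n) - C (2 * (n : ℝ)) * PH n
  | 0 => by simp [PH]
  | (n + 1) => by
      rw [deriv_PH n, derivative_mul, derivative_C, PH_succ n]
      push_cast [C_add, C_mul, C_1, map_ofNat, map_natCast]
      ring

/-- The Gaussian-weighted linear functional. -/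
noncomputable def L (p : Polynomial ℝ) : ℝ := ∫ x : ℝ, Real.exp (-2 * x ^ 2) * p.eval x

lemma integrable_pow_gauss (k : ℕ) :
    Integrable (fun x : ℝ => x ^ k * Real.exp (-2 * x ^ 2)) := by
  have h := integrable_rpow_mul_exp_neg_mul_sq (b := 2) two_pos
    (s := (k : ℝ)) (lt_of_lt_of_le neg_one_lt_zero (Nat.cast_nonneg k))
  simpa [Real.rpow_natCast] using h

lemma integrable_gauss_poly (p : Polynomial ℝ) :
    Integrable (fun x : ℝ => Real.exp (-2 * x ^ 2) * p.eval x) := by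
  induction p using Polynomial.induction_on' with
  | add p q hp hq => simpa [mul_add, Pi.add_def] using hp.add hq
  | monomial k a =>
      have h : (fun x : ℝ => Real.exp (-2 * x ^ 2) * ((monomial k a).eval x))
          = fun x : ℝ => a * (x ^ k * Real.exp (-2 * x ^ 2)) := by
        funext x; simp only [eval_monomial]; ring
      rw [h]
      exact (integrable_pow_gauss k).const_mul a

lemma L_add (p q : Polynomial ℝ) : L (p + q) = L p + L q := by
  unfold L
  simp_rw [eval_add, mul_add]
  exact integral_add (integrable_gauss_poly p) (integrable_gauss_poly q)

lemma L_sub (p q : Polynomial ℝ) : L (p - q) = L p - L q := by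
  unfold L
  simp_rw [eval_sub, mul_sub]
  exact integral_sub (integrable_gauss_poly p) (integrable_gauss_poly q)

lemma L_C_mul (a : ℝ) (p : Polynomial ℝ) : L (C a * p) = a * L p := by
  unfold L
  simp_rw [eval_mul, eval_C, ← mul_assoc, mul_comm _ a, mul_assoc]
  exact integral_const_mul a _

lemma tendsto_gauss_poly_atTop (p : Polynomial ℝ) :
    Tendsto (fun x : ℝ => Real.exp (-2 * x ^ 2) * p.eval x) atTop (𝓝 0) := by
  have hbig : (fun x : ℝ => Real.exp (-2 * x ^ 2) * p.eval x)
      =O[atTop] fun x : ℝ => Real.exp (-(1 / 2) * x) := by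
    induction p using Polynomial.induction_on' with
    | add p q hp hq => simpa [mul_add] using hp.add hq
    | monomial k a =>
        have h := (rpow_mul_exp_neg_mul_sq_isLittleO_exp_neg (b := 2) two_pos
          (k : ℝ)).isBigO.const_mul_left a
        refine h.congr' ?_ (Filter.EventuallyEq.rfl)
        filter_upwards with x
        rw [Real.rpow_natCast]
        simp only [eval_monomial]
        ring
  have hlim : Tendsto (fun x : ℝ => Real.exp (-(1 / 2) * x)) atTop (𝓝 0) := by
    apply Real.tendsto_exp_atBot.comp
    exact Tendsto.const_mul_atTop_of_neg (by norm_num) tendsto_id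
  exact hbig.trans_tendsto hlim

lemma tendsto_gauss_poly_atBot (p : Polynomial ℝ) :
    Tendsto (fun x : ℝ => Real.exp (-2 * x ^ 2) * p.eval x) atBot (𝓝 0) := by
  have h := (tendsto_gauss_poly_atTop (p.comp (-X))).comp tendsto_neg_atBot_atTop
  refine h.congr fun x => ?_
  simp [Function.comp, eval_comp]

/-- Integration by parts against the Gaussian weight. -/
lemma L_derivative (p : Polynomial ℝ) : L (derivative p) = L (C 4 * X * p) := by
  set f : ℝ → ℝ := fun x => Real.exp (-2 * x ^ 2) * p.eval x with hf
  set g : ℝ → ℝ := fun x =>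
    Real.exp (-2 * x ^ 2) * ((derivative p).eval x - 4 * x * p.eval x) with hg
  have hderiv : ∀ x : ℝ, HasDerivAt f (g x) x := by
    intro x
    have h0 : HasDerivAt (fun x : ℝ => -2 * x ^ 2) (-4 * x) x := by
      have h := (hasDerivAt_pow 2 x).const_mul (-2 : ℝ)
      refine h.congr_deriv ?_
      norm_num
      ring
    have h1 : HasDerivAt (fun x : ℝ => Real.exp (-2 * x ^ 2))
        (Real.exp (-2 * x ^ 2) * (-4 * x)) x := h0.exp
    have h2 := p.hasDerivAt x
    have h3 := h1.mul h2
    refine h3.congr_deriv ?_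
    simp only [hg]
    ring
  have hint : Integrable g := by
    have h := integrable_gauss_poly (derivative p - C 4 * X * p)
    refine h.congr (Filter.EventuallyEq.of_eq ?_)
    funext x
    simp only [hg, eval_sub, eval_mul, eval_C, eval_X]
  have hIic : ∫ x in Set.Iic (0:ℝ), g x = f 0 - 0 :=
    integral_Iic_of_hasDerivAt_of_tendsto' (fun x _ => hderiv x)
      hint.integrableOn (tendsto_gauss_poly_atBot p)
  have hIoi : ∫ x in Set.Ioi (0:ℝ), g x = 0 - f 0 :=
    integral_Ioi_of_hasDerivAt_of_tendsto' (fun x _ => hderiv x)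
      hint.integrableOn (tendsto_gauss_poly_atTop p)
  have hsplit : (∫ x in Set.Iic (0:ℝ), g x) + ∫ x in Set.Ioi (0:ℝ), g x = ∫ x : ℝ, g x :=
    intervalIntegral.integral_Iic_add_Ioi hint.integrableOn hint.integrableOn
  have hzero : ∫ x : ℝ, g x = 0 := by rw [← hsplit, hIic, hIoi]; ring
  have hdiff : L (derivative p) - L (C 4 * X * p) = ∫ x : ℝ, g x := by
    unfold L
    rw [← integral_sub (integrable_gauss_poly _) (integrable_gauss_poly _)]
    congr 1
    funext x
    simp only [hg, eval_mul, eval_C, eval_X]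
    ring
  linarith [hdiff, hzero]

lemma L_PH_sq_succ (n : ℕ) : L (PH (n + 1) ^ 2) = (2 * n + 1) * L (PH n ^ 2) := by
  set A := PH n with hA
  set B := derivative (PH n) with hB
  set R : Polynomial ℝ := X * A ^ 2 - A * B with hR
  have hDB : derivative B = C 2 * X * B - C (2 * (n : ℝ)) * A := ode_PH n
  have hkey : PH (n + 1) ^ 2
      = (C (2 * (n : ℝ)) * A ^ 2 + A ^ 2) - (derivative R - C 4 * X * R) := by
    rw [PH_succ n, ← hA, ← hB]
    have hDR : derivative R = A ^ 2 + X * (C 2 * A * B) - (B * B + A * derivative B) := by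
      rw [hR]
      rw [derivative_sub, derivative_mul, derivative_mul, derivative_X, derivative_pow]
      push_cast [C_add, C_mul, C_1, map_ofNat, map_natCast]
      ring
    rw [hDR, hDB]
    push_cast [C_add, C_mul, C_1, map_ofNat, map_natCast]
    ring
  rw [hkey, L_sub, L_add, L_C_mul, L_sub, L_derivative R]
  ring

lemma L_PH_sq_zero : L (PH 0 ^ 2) = (2 : ℝ) ^ ((0 : ℝ) - 1 / 2) * Real.Gamma ((0 : ℝ) + 1 / 2) := by
  unfold L
  simp only [PH, one_pow, eval_one, mul_one]
  rw [integral_gaussian, zero_add, Real.Gamma_one_half_eq, zero_sub,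
    Real.rpow_neg (by norm_num : (0:ℝ) ≤ 2), ← Real.sqrt_eq_rpow,
    Real.sqrt_div pi_nonneg]
  ring

theorem L_PH_sq (n : ℕ) :
    L (PH n ^ 2) = (2 : ℝ) ^ ((n : ℝ) - 1 / 2) * Real.Gamma ((n : ℝ) + 1 / 2) := by
  induction n with
  | zero => simpa using L_PH_sq_zero
  | succ n ih =>
      rw [L_PH_sq_succ n, ih]
      have h1 : ((n + 1 : ℕ) : ℝ) = (n : ℝ) + 1 := by push_cast; ring
      rw [h1]
      have h2 : (n : ℝ) + 1 + 1 / 2 = ((n : ℝ) + 1 / 2) + 1 := by ring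
      rw [h2, Real.Gamma_add_one (by positivity)]
      have h3 : (n : ℝ) + 1 - 1 / 2 = ((n : ℝ) - 1 / 2) + 1 := by ring
      rw [h3, Real.rpow_add two_pos, Real.rpow_one]
      ring

/-- `∫_{-∞}^{∞} e^{-2x²} Hₙ(x)² dx = 2^{n - 1/2} Γ(n + 1/2)`. -/
theorem integral_exp_neg_two_sq_hermite_sq (n : ℕ) :
    ∫ x : ℝ, Real.exp (-2 * x ^ 2) * physHermite n x ^ 2
      = (2 : ℝ) ^ ((n : ℝ) - 1 / 2) * Real.Gamma ((n : ℝ) + 1 / 2) := by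
  have h := L_PH_sq n
  unfold L at h
  simp_rw [eval_pow, eval_PH] at h
  exact h
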